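/- Let (G,Γ₁,Γ₂) be a boundary triple for S, and let A, B be bounded linear operators on G such that A B* = B A*, ker M^{A,B} = {0} (so that H^{A,B} is self-adjoint), where M^{A,B}(x₁,x₂) = (A x₁ − B x₂, B x₁ + A x₂) on G ⊕ G. Then for every z in the intersection of the resolvent sets of H^{A,B} and H⁰: the operator B Q(z) − A is injective, for every f ∈ H the vector B γ(z̄)* f lies in the range of B Q(z) − A, and (H^{A,B} − z)⁻¹ f = (H⁰ − z)⁻¹ f − γ(z) (B Q(z) − A)⁻¹ B γ(z̄)* f for all f ∈ H, where γ(z̄)* : H → G is the adjoint of γ(z̄). -/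

import Mathlib

open ContinuousLinearMap

variable {H : Type*} [NormedAddCommGroup H] [InnerProductSpace ℂ H] [CompleteSpace H]
variable {G : Type*} [NormedAddCommGroup G] [InnerProductSpace ℂ G] [CompleteSpace G]

/-- The operator `M^{A,B}` on `G × G`, `(x₁,x₂) ↦ (A x₁ - B x₂, B x₁ + A x₂)`. -/
noncomputable def MAB (A B : G →L[ℂ] G) : (G × G) →L[ℂ] (G × G) :=
  ((A.comp (fst ℂ G G)) - (B.comp (snd ℂ G G))).prod
    ((B.comp (fst ℂ G G)) + (A.comp (snd ℂ G G)))

/-- A bounded operator is boundedly invertible if it has a bounded two-sided inverse. -/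
def IsBoundedlyInvertible {E F : Type*} [NormedAddCommGroup E] [NormedSpace ℂ E]
    [NormedAddCommGroup F] [NormedSpace ℂ F] (T : E →L[ℂ] F) : Prop :=
  ∃ T' : F →L[ℂ] E, (∀ x, T' (T x) = x) ∧ (∀ y, T (T' y) = y)

/-- A densely defined operator is symmetric if `⟪Sφ, ψ⟫ = ⟪φ, Sψ⟫` on its domain. -/
def IsSymmetricPMap (S : H →ₗ.[ℂ] H) : Prop :=
  ∀ φ ψ : S.domain, (inner ℂ (S φ) (ψ : H) : ℂ) = inner ℂ (φ : H) (S ψ)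

/-- A boundary triple `(G, Γ₁, Γ₂)` for a symmetric operator `S`: two boundary maps
on `dom S*` satisfying the abstract Green identity and joint surjectivity. -/
structure BoundaryTriple (S : H →ₗ.[ℂ] H) (G : Type*) [NormedAddCommGroup G]
    [InnerProductSpace ℂ G] [CompleteSpace G] where
  Γ₁ : S.adjoint.domain →ₗ[ℂ] G
  Γ₂ : S.adjoint.domain →ₗ[ℂ] G
  green : ∀ φ ψ : S.adjoint.domain,
    (inner ℂ (φ : H) (S.adjoint ψ) : ℂ) - inner ℂ (S.adjoint φ) (ψ : H)
      = (inner ℂ (Γ₁ φ) (Γ₂ ψ) : ℂ) - inner ℂ (Γ₂ φ) (Γ₁ ψ)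
  surj : Function.Surjective fun φ : S.adjoint.domain => (Γ₁ φ, Γ₂ φ)

/-- The restriction of a partially defined operator `T` to a submodule `K` of its domain. -/
noncomputable def pmapRestrict (T : H →ₗ.[ℂ] H) (K : Submodule ℂ T.domain) : H →ₗ.[ℂ] H where
  domain := K.map T.domain.subtype
  toFun := (T.toFun.comp K.subtype).comp
    (Submodule.equivMapOfInjective T.domain.subtype
      (Submodule.injective_subtype T.domain) K).symm.toLinearMap

/-- The distinguished extension `H⁰`: the restriction of `S*` to `ker Γ₁`. -/
noncomputable def H0 (S : H →ₗ.[ℂ] H) (BT : BoundaryTriple S G) : H →ₗ.[ℂ] H :=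
  pmapRestrict S.adjoint (LinearMap.ker BT.Γ₁)

/-- The extension `H^{A,B}`: the restriction of `S*` to `{φ : A Γ₁ φ = B Γ₂ φ}`. -/
noncomputable def HAB (S : H →ₗ.[ℂ] H) (BT : BoundaryTriple S G) (A B : G →L[ℂ] G) :
    H →ₗ.[ℂ] H :=
  pmapRestrict S.adjoint
    (LinearMap.ker ((A.toLinearMap.comp BT.Γ₁) - (B.toLinearMap.comp BT.Γ₂)))

/-- `R` is the resolvent of `T` at `z`: a bounded, everywhere defined two-sided inverse
of `T - z`. -/
def IsResolventOf (T : H →ₗ.[ℂ] H) (z : ℂ) (R : H →L[ℂ] H) : Prop :=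
  (∀ f : H, ∃ φ : T.domain, (φ : H) = R f ∧ T φ - z • (φ : H) = f) ∧
  (∀ φ : T.domain, R (T φ - z • (φ : H)) = φ)

/-- `z` is in the resolvent set of `T`. -/
def InResolventSet (T : H →ₗ.[ℂ] H) (z : ℂ) : Prop := ∃ R, IsResolventOf T z R

/-- `γz` is the `Γ`-field at `z`: the inverse of `Γ₁` restricted to the deficiency
space `N_z = ker (S* - z)`. -/
def IsGammaField (S : H →ₗ.[ℂ] H) (BT : BoundaryTriple S G) (z : ℂ) (γz : G →L[ℂ] H) : Prop :=
  (∀ ξ : G, ∃ φ : S.adjoint.domain, (φ : H) = γz ξ ∧ S.adjoint φ = z • (φ : H) ∧ BT.Γ₁ φ = ξ) ∧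
  (∀ φ : S.adjoint.domain, S.adjoint φ = z • (φ : H) → γz (BT.Γ₁ φ) = (φ : H))

/-- `Qz` is the `Q`-function (Weyl function) at `z`: `Qz = Γ₂ ∘ γz`. -/
def IsQFunction (S : H →ₗ.[ℂ] H) (BT : BoundaryTriple S G) (z : ℂ)
    (γz : G →L[ℂ] H) (Qz : G →L[ℂ] G) : Prop :=
  IsGammaField S BT z γz ∧
    ∀ φ : S.adjoint.domain, S.adjoint φ = z • (φ : H) → Qz (BT.Γ₁ φ) = BT.Γ₂ φ

/-! The solutions `RAB f` and `R0 f` of `(S* - z)ψ = f` in the domains of `H^{A,B}` and `H⁰`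
differ by a vector of `N_z`, namely `γ(z) ξ` with `ξ = Γ₁ (RAB f)`. The boundary condition
`AΓ₁ = BΓ₂` of `H^{A,B}` then says `(BQ(z) - A)(-ξ) = BΓ₂ (R0 f)`, and Green's identity tested
against `N_{z̄}` identifies `Γ₂ (R0 f)` with `γ(z̄)* f`. A kernel vector `u` of `BQ(z) - A` makes
`γ(z) u` an eigenvector of `H^{A,B}` for `z`, hence zero. -/

section

variable {E : Type*} [NormedAddCommGroup E] [InnerProductSpace ℂ E]

lemma pmapRestrict_apply {T : E →ₗ.[ℂ] E} {K : Submodule ℂ T.domain}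
    (φ : (pmapRestrict T K).domain) (ψ : T.domain) (hψφ : (ψ : E) = φ) :
    pmapRestrict T K φ = T ψ := by
  obtain ⟨ψ', hψ'K, hψ'φ⟩ := Submodule.mem_map.1 φ.2
  obtain rfl : ψ' = ψ := Subtype.ext (hψ'φ.trans hψφ.symm)
  have hφψ : (⟨φ, φ.2⟩ : K.map T.domain.subtype) =
      Submodule.equivMapOfInjective T.domain.subtype
        (Submodule.injective_subtype T.domain) K ⟨ψ', hψ'K⟩ :=
    Subtype.ext hψ'φ.symm
  show T.toFun ((Submodule.equivMapOfInjective T.domain.subtype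
    (Submodule.injective_subtype T.domain) K).symm ⟨φ, φ.2⟩) = T ψ'
  rw [hφψ, LinearEquiv.symm_apply_apply]
  rfl

namespace IsResolventOf

variable {T : E →ₗ.[ℂ] E} {K : Submodule ℂ T.domain} {z : ℂ} {R : E →L[ℂ] E}

lemma exists_mem_pmapRestrict (hR : IsResolventOf (pmapRestrict T K) z R) (f : E) :
    ∃ ψ : T.domain, ψ ∈ K ∧ (ψ : E) = R f ∧ T ψ - z • (ψ : E) = f := by
  obtain ⟨φ, hφR, hφf⟩ := hR.1 f
  obtain ⟨ψ, hψK, hψφ : (ψ : E) = φ⟩ := Submodule.mem_map.1 φ.2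
  refine ⟨ψ, hψK, hψφ.trans hφR, ?_⟩
  rw [← pmapRestrict_apply φ ψ hψφ, hψφ]
  exact hφf

lemma eq_zero_of_mem_pmapRestrict (hR : IsResolventOf (pmapRestrict T K) z R)
    {ψ : T.domain} (hψK : ψ ∈ K) (hψ : T ψ = z • (ψ : E)) : ψ = 0 := by
  let φ : (pmapRestrict T K).domain := ⟨ψ, Submodule.mem_map_of_mem hψK⟩
  have hφ : pmapRestrict T K φ - z • (φ : E) = 0 := by
    rw [pmapRestrict_apply φ ψ rfl, hψ, sub_self]
  have := hR.2 φ
  rw [hφ, map_zero] at this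
  exact Subtype.ext this.symm

end IsResolventOf

end

variable {S : H →ₗ.[ℂ] H} {BT : BoundaryTriple S G} {z : ℂ}

lemma BoundaryTriple.Γ₂_eq_adjoint_gammaField_apply {γzbar : G →L[ℂ] H}
    (hγ : IsGammaField S BT (starRingEnd ℂ z) γzbar) {φ : S.adjoint.domain}
    (hφ : BT.Γ₁ φ = 0) : BT.Γ₂ φ = adjoint γzbar (S.adjoint φ - z • (φ : H)) := by
  refine ext_inner_left ℂ fun ξ => ?_
  obtain ⟨η, hηγ, hη, rfl⟩ := hγ.1 ξ
  have green := BT.green η φ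
  rw [hφ, inner_zero_right, sub_zero, hη, inner_smul_left, Complex.conj_conj] at green
  rw [adjoint_inner_right, ← hηγ, inner_sub_right, inner_smul_right, green]

namespace IsQFunction

variable {γz : G →L[ℂ] H} {Qz : G →L[ℂ] G} {A B : G →L[ℂ] G}

lemma injective_comp_sub (hQ : IsQFunction S BT z γz Qz) {R : H →L[ℂ] H}
    (hR : IsResolventOf (HAB S BT A B) z R) : Function.Injective (B ∘L Qz - A) := by
  refine (injective_iff_map_eq_zero _).2 fun u hu => ?_
  obtain ⟨φ, -, hφ, rfl⟩ := hQ.1.1 u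
  have hφK : φ ∈ LinearMap.ker (A.toLinearMap.comp BT.Γ₁ - B.toLinearMap.comp BT.Γ₂) := by
    rw [sub_apply, comp_apply, hQ.2 φ hφ, sub_eq_zero] at hu
    simp [hu]
  rw [hR.eq_zero_of_mem_pmapRestrict hφK hφ, map_zero]

lemma exists_resolvent_eq_sub (hQ : IsQFunction S BT z γz Qz) {γzbar : G →L[ℂ] H}
    (hγbar : IsGammaField S BT (starRingEnd ℂ z) γzbar) {R0 RAB : H →L[ℂ] H}
    (hR0 : IsResolventOf (H0 S BT) z R0) (hRAB : IsResolventOf (HAB S BT A B) z RAB) (f : H) :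
    ∃ u : G, (B ∘L Qz - A) u = B (adjoint γzbar f) ∧ RAB f = R0 f - γz u := by
  obtain ⟨ψAB, hψAB, hψAB_R, hψAB_f⟩ := hRAB.exists_mem_pmapRestrict f
  obtain ⟨ψ0, hψ0 : BT.Γ₁ ψ0 = 0, hψ0_R, hψ0_f⟩ := hR0.exists_mem_pmapRestrict f
  have hboundary : A (BT.Γ₁ ψAB) = B (BT.Γ₂ ψAB) := by simpa [sub_eq_zero] using hψAB
  have hΓ₂ψ0 := BT.Γ₂_eq_adjoint_gammaField_apply hγbar hψ0
  rw [hψ0_f] at hΓ₂ψ0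
  have heig : S.adjoint (ψAB - ψ0) = z • ((ψAB - ψ0 : S.adjoint.domain) : H) := by
    rw [S.adjoint.map_sub, Submodule.coe_sub, smul_sub]
    linear_combination (norm := module) hψAB_f - hψ0_f
  refine ⟨-BT.Γ₁ (ψAB - ψ0), ?_, ?_⟩
  · rw [sub_apply, comp_apply, map_neg, hQ.2 _ heig, map_sub, map_sub, hψ0, sub_zero,
      map_neg, map_neg, hboundary, ← hΓ₂ψ0, map_sub]
    abel
  · rw [map_neg, hQ.1.2 _ heig, Submodule.coe_sub, ← hψAB_R, ← hψ0_R]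
    abel

end IsQFunction

theorem krein_resolvent_formula_nonnormalized_general (S : H →ₗ.[ℂ] H)
    (BT : BoundaryTriple S G) (A B : G →L[ℂ] G) :
    ∀ z : ℂ, InResolventSet (HAB S BT A B) z → InResolventSet (H0 S BT) z →
      ∀ (γz γzbar : G →L[ℂ] H) (Qz : G →L[ℂ] G),
        IsGammaField S BT (starRingEnd ℂ z) γzbar → IsQFunction S BT z γz Qz →
        Function.Injective (B ∘L Qz - A) ∧
        (∀ f : H, ∃ u : G, (B ∘L Qz - A) u = B (adjoint γzbar f)) ∧
        ∀ R0 RAB : H →L[ℂ] H,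
          IsResolventOf (H0 S BT) z R0 → IsResolventOf (HAB S BT A B) z RAB →
          ∀ (f : H) (u : G), (B ∘L Qz - A) u = B (adjoint γzbar f) →
            RAB f = R0 f - γz u := by
  intro z ⟨RAB, hRAB⟩ ⟨R0, hR0⟩ γz γzbar Qz hγbar hQ
  have hinj := hQ.injective_comp_sub hRAB
  refine ⟨hinj, fun f => ?_, fun R0' RAB' hR0' hRAB' f u hu => ?_⟩
  · obtain ⟨u, hu, -⟩ := hQ.exists_resolvent_eq_sub hγbar hR0 hRAB f
    exact ⟨u, hu⟩
  · obtain ⟨u', hu', hformula⟩ := hQ.exists_resolvent_eq_sub hγbar hR0' hRAB' f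
    rwa [hinj (hu.trans hu'.symm)]

/-- Krein's resolvent formula, non-normalized parameters. Assume
`A B* = B A*` and `ker M^{A,B} = 0`. For `z` in the intersection of the resolvent sets of
`H^{A,B}` and `H⁰`: the operator `BQ(z) − A` is injective, every `B γ(z̄)* f` lies in its
range, and `(H^{A,B} − z)⁻¹ f = (H⁰ − z)⁻¹ f − γ(z) (BQ(z) − A)⁻¹ B γ(z̄)* f`. -/
theorem krein_resolvent_formula_nonnormalized (S : H →ₗ.[ℂ] H)
    (hdense : Dense (S.domain : Set H)) (hclosed : S.IsClosed) (hsymm : IsSymmetricPMap S)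
    (BT : BoundaryTriple S G) (A B : G →L[ℂ] G)
    (hAB : A ∘L adjoint B = B ∘L adjoint A)
    (hker : ∀ x : G × G, MAB A B x = 0 → x = 0) :
    ∀ z : ℂ, InResolventSet (HAB S BT A B) z → InResolventSet (H0 S BT) z →
      ∀ (γz γzbar : G →L[ℂ] H) (Qz : G →L[ℂ] G),
        IsGammaField S BT (starRingEnd ℂ z) γzbar → IsQFunction S BT z γz Qz →
        Function.Injective (B ∘L Qz - A) ∧
        (∀ f : H, ∃ u : G, (B ∘L Qz - A) u = B (adjoint γzbar f)) ∧
        ∀ R0 RAB : H →L[ℂ] H,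
          IsResolventOf (H0 S BT) z R0 → IsResolventOf (HAB S BT A B) z RAB →
          ∀ (f : H) (u : G), (B ∘L Qz - A) u = B (adjoint γzbar f) →
            RAB f = R0 f - γz u :=
  krein_resolvent_formula_nonnormalized_general S BT A B
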